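/- (Lemma B.2(b), disconnecting a point, stated for a fixed representation in the self-adjoint case) Let A be a unital C*-algebra and u_{ij} ∈ A (1 ≤ i,j ≤ n) be self-adjoint, satisfying Σ_{k=1}^n u_{kj} = Σ_{l=1}^n u_{il} for all i,j (the relations of the partition in P(1,1) consisting of two singleton blocks). Let p ∈ P(k,l) be a partition such that the relations R(p) hold for the u_{ij}, and let x be any point of p. Then the relations R(p') hold, where p' is obtained from p by disconnecting the point x from its block and turning it into a singleton block (all other blocks unchanged). -/

import Mathlib

/-!
If `x` shares its block with some other point `y`, then for a labelling compatible with
`p' = disconnect p x` exactly one label of `x` (that of `y`) makes it compatible with `p`, so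
`δ_{p'}(γ, β) = ∑_c δ_p(γ, β[x := c])`. For a lower point `x` this writes the left side of
`R(p')` as `∑_c` of left sides of `R(p)`, hence of right sides. There `c` only occurs as the row
index of one factor `u_{c γ'_x}`, and `∑_c u_{c j} = ∑_m u_{i m}` moves the sum to the column
index, which reindexes back to the right side of `R(p')`. Upper points reduce to lower ones
through the involution `p ↦ p*`, which exchanges the two sides of `R(p)` once `u` is transposed.
-/

open scoped Classical

namespace PartitionCstar

/-- A partition in `P(k,l)`: an equivalence relation (whose classes are the blocks)
on the disjoint union of `k` upper points and `l` lower points. -/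
abbrev Partition (k l : ℕ) := Setoid (Fin k ⊕ Fin l)

/-- `labelsMatch p α β` holds iff, labelling the upper points by `α` and the lower points
by `β`, the strings (blocks) of `p` connect only equal indices. -/
def labelsMatch {n k l : ℕ} (p : Partition k l) (α : Fin k → Fin n) (β : Fin l → Fin n) :
    Prop :=
  ∀ x y : Fin k ⊕ Fin l, p.r x y → Sum.elim α β x = Sum.elim α β y

/-- The delta function `δ_p(α,β) ∈ {0,1}`. -/
noncomputable def delta {n k l : ℕ} (p : Partition k l) (α : Fin k → Fin n)
    (β : Fin l → Fin n) : ℕ :=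
  if labelsMatch p α β then 1 else 0

/-- The relations `R(p)` for a matrix of elements `u` of a unital ring:
`∑_γ δ_p(γ,β) u_{γ₁α₁}⋯u_{γₖαₖ} = ∑_{γ'} δ_p(α,γ') u_{β₁γ'₁}⋯u_{β_lγ'_l}`.
(For `k = 0` resp. `l = 0` the empty product is `1`, which yields the conventions
`δ_p(∅,β)·1` resp. `δ_p(α,∅)·1`.) -/
def SatisfiesRel {A : Type*} [Ring A] {n : ℕ} (u : Fin n → Fin n → A)
    {k l : ℕ} (p : Partition k l) : Prop :=
  ∀ (α : Fin k → Fin n) (β : Fin l → Fin n),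
    (∑ γ : Fin k → Fin n,
      if labelsMatch p γ β then (List.ofFn fun s => u (γ s) (α s)).prod else 0)
    = ∑ γ' : Fin l → Fin n,
      if labelsMatch p α γ' then (List.ofFn fun t => u (β t) (γ' t)).prod else 0

/-- The disjoint union of two set partitions. -/
def sumPartition {X Y : Type*} (p : Setoid X) (q : Setoid Y) : Setoid (X ⊕ Y) where
  r := Sum.LiftRel p.r q.r
  iseqv := by
    refine ⟨fun a => ?_, fun {a b} h => ?_, fun {a b c} h₁ h₂ => ?_⟩
    · cases a with
      | inl x => exact Sum.LiftRel.inl (p.iseqv.refl x)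
      | inr y => exact Sum.LiftRel.inr (q.iseqv.refl y)
    · cases h with
      | inl h => exact Sum.LiftRel.inl (p.iseqv.symm h)
      | inr h => exact Sum.LiftRel.inr (q.iseqv.symm h)
    · cases h₁ with
      | inl h₁ =>
        cases h₂ with
        | inl h₂ => exact Sum.LiftRel.inl (p.iseqv.trans h₁ h₂)
      | inr h₁ =>
        cases h₂ with
        | inr h₂ => exact Sum.LiftRel.inr (q.iseqv.trans h₁ h₂)

/-- Reindexing equivalence for the tensor product of partitions. -/
def tensorEquiv (k l k' l' : ℕ) :
    (Fin (k + k') ⊕ Fin (l + l')) ≃ ((Fin k ⊕ Fin l) ⊕ (Fin k' ⊕ Fin l')) :=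
  (Equiv.sumCongr finSumFinEquiv.symm finSumFinEquiv.symm).trans
    (Equiv.sumSumSumComm (Fin k) (Fin k') (Fin l) (Fin l'))

/-- The tensor product `p ⊗ q` of two partitions: horizontal concatenation,
blocks kept separate. -/
def tensor {k l k' l' : ℕ} (p : Partition k l) (q : Partition k' l') :
    Partition (k + k') (l + l') :=
  Setoid.comap (tensorEquiv k l k' l') (sumPartition p q)

/-- The join of `p ∈ P(k,l)` and `q ∈ P(l,m)` on the `k` upper, `l` middle and
`m` lower points, identifying the lower points of `p` with the upper points of `q`. -/
def compJoin {k l m : ℕ} (q : Partition l m) (p : Partition k l) :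
    Setoid (Fin k ⊕ (Fin l ⊕ Fin m)) :=
  (Setoid.comap (Equiv.sumAssoc (Fin k) (Fin l) (Fin m)).symm
      (sumPartition p (⊥ : Setoid (Fin m))))
    ⊔ sumPartition (⊥ : Setoid (Fin k)) q

/-- The composition `qp ∈ P(k,m)` of `q ∈ P(l,m)` below `p ∈ P(k,l)`: restriction
of the join to the upper and lower points. -/
def comp {k l m : ℕ} (q : Partition l m) (p : Partition k l) : Partition k m :=
  Setoid.comap (Sum.map id Sum.inr : Fin k ⊕ Fin m → Fin k ⊕ (Fin l ⊕ Fin m))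
    (compJoin q p)

/-- Middle points in the composition procedure. -/
def IsMiddle {k l m : ℕ} : Fin k ⊕ (Fin l ⊕ Fin m) → Prop
  | Sum.inr (Sum.inl _) => True
  | _ => False

/-- `rl q p`: the number of removed loops in the composition of `q` and `p`, i.e. the
number of blocks of the join consisting entirely of middle points. -/
noncomputable def rl {k l m : ℕ} (q : Partition l m) (p : Partition k l) : ℕ :=
  Nat.card {c : Quotient (compJoin q p) //
    ∀ x : Fin k ⊕ (Fin l ⊕ Fin m), Quotient.mk (compJoin q p) x = c → IsMiddle x}

/-- The involution `p* ∈ P(l,k)`: turning `p ∈ P(k,l)` upside down. -/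
def involution {k l : ℕ} (p : Partition k l) : Partition l k :=
  Setoid.comap (Equiv.sumComm (Fin l) (Fin k)) p

/-- The vertical reflection `p̃ ∈ P(k,l)`: reflecting `p` at the vertical axis. -/
def reflect {k l : ℕ} (p : Partition k l) : Partition k l :=
  Setoid.comap (Sum.map Fin.rev Fin.rev) p

/-- The setoid relating `x` and `y` (and nothing else besides equality). -/
def pairSetoid {X : Type*} (x y : X) : Setoid X where
  r a b := a = b ∨ (a = x ∧ b = y) ∨ (a = y ∧ b = x)
  iseqv := by
    refine ⟨fun a => Or.inl rfl, fun {a b} h => ?_, fun {a b c} h₁ h₂ => ?_⟩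
    · rcases h with rfl | ⟨ha, hb⟩ | ⟨ha, hb⟩
      · exact Or.inl rfl
      · exact Or.inr (Or.inr ⟨hb, ha⟩)
      · exact Or.inr (Or.inl ⟨hb, ha⟩)
    · rcases h₁ with rfl | h₁
      · exact h₂
      · rcases h₂ with rfl | h₂
        · exact Or.inr h₁
        · rcases h₁ with ⟨ha, hb⟩ | ⟨ha, hb⟩
          · rcases h₂ with ⟨hb', hc⟩ | ⟨hb', hc⟩
            · exact Or.inr (Or.inl ⟨ha, hc⟩)
            · exact Or.inl (ha.trans hc.symm)
          · rcases h₂ with ⟨hb', hc⟩ | ⟨hb', hc⟩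
            · exact Or.inl (ha.trans hc.symm)
            · exact Or.inr (Or.inr ⟨ha, hc⟩)

/-- Connecting (merging) the blocks of the points `x` and `y` of a partition. -/
def mergeBlocks {X : Type*} (p : Setoid X) (x y : X) : Setoid X :=
  p ⊔ pairSetoid x y

/-- Disconnecting the point `x` from its block and turning it into a singleton block. -/
def disconnect {X : Type*} (p : Setoid X) (x : X) : Setoid X where
  r a b := a = b ∨ (p.r a b ∧ a ≠ x ∧ b ≠ x)
  iseqv := by
    refine ⟨fun a => Or.inl rfl, fun {a b} h => ?_, fun {a b c} h₁ h₂ => ?_⟩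
    · rcases h with rfl | ⟨h, ha, hb⟩
      · exact Or.inl rfl
      · exact Or.inr ⟨p.iseqv.symm h, hb, ha⟩
    · rcases h₁ with rfl | ⟨h₁, ha, hb⟩
      · exact h₂
      · rcases h₂ with rfl | ⟨h₂, hb', hc⟩
        · exact Or.inr ⟨h₁, ha, hb⟩
        · exact Or.inr ⟨p.iseqv.trans h₁ h₂, ha, hc⟩

/-- The partition of the lower points induced by `p ∈ P(0,l)`. -/
def lowerSetoid {l : ℕ} (p : Partition 0 l) : Setoid (Fin l) :=
  Setoid.comap Sum.inr p

/-- The reindexing map for inserting `m` points after position `t` among `l` points. -/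
def insertMap (l m t : ℕ) (ht : t ≤ l) : Fin (l + m) → Fin l ⊕ Fin m := fun i =>
  if h1 : (i : ℕ) < t then Sum.inl ⟨i, lt_of_lt_of_le h1 ht⟩
  else if h2 : (i : ℕ) < t + m then Sum.inr ⟨(i : ℕ) - t, by omega⟩
  else Sum.inl ⟨(i : ℕ) - m, by have := i.isLt; omega⟩

/-- The partition in `P(0, l+m)` obtained from `p ∈ P(0,l)` by inserting `q ∈ P(0,m)`
after the `t`-th lower point of `p` (blocks of `p` and `q` kept separate). -/
def insertAt {l m : ℕ} (p : Partition 0 l) (q : Partition 0 m) (t : ℕ) (ht : t ≤ l) :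
    Partition 0 (l + m) :=
  Setoid.comap (Sum.elim (fun a : Fin 0 => a.elim0) (insertMap l m t ht))
    (sumPartition (lowerSetoid p) (lowerSetoid q))

/-- The reindexing map for the rotation moving the leftmost upper point to the
leftmost lower position. -/
def rotateMap (k l : ℕ) : Fin k ⊕ Fin (l + 1) → Fin (k + 1) ⊕ Fin l
  | Sum.inl a => Sum.inl a.succ
  | Sum.inr b => Fin.cases (Sum.inl (0 : Fin (k + 1))) (fun b' => Sum.inr b') b

/-- The rotated version of `p ∈ P(k+1, l)`: the leftmost upper point becomes the new
leftmost lower point (staying in its block). -/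
def rotate {k l : ℕ} (p : Partition (k + 1) l) : Partition k (l + 1) :=
  Setoid.comap (rotateMap k l) p

/-- The embedding of the remaining points after erasing the lower points `j` and `j+1`. -/
def eraseMap (k l j : ℕ) : Fin k ⊕ Fin l → Fin k ⊕ Fin (l + 2) :=
  Sum.map id fun b =>
    if (b : ℕ) < j then ⟨(b : ℕ), by have := b.isLt; omega⟩
    else ⟨(b : ℕ) + 2, by have := b.isLt; omega⟩

/-- The partition in `P(k,l)` obtained from `p ∈ P(k,l+2)` by connecting the blocks of
the `j`-th and `(j+1)`-th lower points and then erasing those two points. -/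
def erasePair {k l : ℕ} (p : Partition k (l + 2)) (j : Fin (l + 1)) : Partition k l :=
  Setoid.comap (eraseMap k l j)
    (mergeBlocks p (Sum.inr ⟨(j : ℕ), by have := j.isLt; omega⟩)
      (Sum.inr ⟨(j : ℕ) + 1, by have := j.isLt; omega⟩))

/-- The non-unital relations `R(p)` relative to a projection `P₀`:
`P₀·∑_γ δ_p(γ,β) u_{γ₁α₁}⋯u_{γₖαₖ} = (∑_{γ'} δ_p(α,γ') u_{β₁γ'₁}⋯u_{β_lγ'_l})·P₀`,
with the conventions `δ_p(∅,β)·P₀` resp. `δ_p(α,∅)·P₀` for `k = 0` resp. `l = 0`. -/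
def SatisfiesRelNU {A : Type*} [NonUnitalRing A] {n : ℕ} (P₀ : A)
    (u : Fin n → Fin n → A) {k l : ℕ} (p : Partition k l) : Prop :=
  ∀ (α : Fin k → Fin n) (β : Fin l → Fin n),
    (∑ γ : Fin k → Fin n,
      if labelsMatch p γ β then
        (List.ofFn fun s => u (γ s) (α s)).foldl (· * ·) P₀ else 0)
    = ∑ γ' : Fin l → Fin n,
      if labelsMatch p α γ' then
        (List.ofFn fun t => u (β t) (γ' t)).foldr (· * ·) P₀ else 0


section Blocks

variable {X : Type*} {p : Setoid X} {x y : X}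

theorem disconnect_eq_self (hx : ∀ y, p.r x y → y = x) : disconnect p x = p := by
  ext a b
  constructor
  · rintro (rfl | ⟨hab, -, -⟩)
    exacts [p.refl' a, hab]
  · intro hab
    by_cases ha : a = x
    · subst ha
      exact Or.inl (hx b hab).symm
    by_cases hb : b = x
    · subst hb
      exact absurd (hx a (p.symm' hab)) ha
    exact Or.inr ⟨hab, ha, hb⟩

variable [DecidableEq X] {ι : Type*}

theorem le_ker_update_iff (hxy : p.r x y) (hyx : y ≠ x) (L : X → ι) (c : ι) :
    p ≤ Setoid.ker (Function.update L x c) ↔ disconnect p x ≤ Setoid.ker L ∧ c = L y := by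
  simp only [Setoid.le_def, Setoid.ker_def]
  constructor
  · intro H
    refine ⟨fun {a b} hab => ?_, ?_⟩
    · rcases hab with rfl | ⟨hab, ha, hb⟩
      · rfl
      · simpa [Function.update_of_ne ha, Function.update_of_ne hb] using H hab
    · simpa [Function.update_of_ne hyx] using H hxy
  · rintro ⟨H, rfl⟩ a b hab
    have relabel : ∀ a, p.r x a → Function.update L x (L y) a = L y := fun a hxa => by
      by_cases ha : a = x
      · simp [ha]
      · rw [Function.update_of_ne ha]
        exact (H (Or.inr ⟨p.trans' (p.symm' hxy) hxa, hyx, ha⟩)).symm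
    by_cases hxa : p.r x a
    · rw [relabel a hxa, relabel b (p.trans' hxa hab)]
    · have ha : a ≠ x := fun h => hxa (h ▸ p.refl' a)
      have hb : b ≠ x := fun h => hxa (p.symm' (h ▸ hab))
      rw [Function.update_of_ne ha, Function.update_of_ne hb]
      exact H (Or.inr ⟨hab, ha, hb⟩)

theorem sum_ite_le_ker_update [Fintype ι] {M : Type*} [AddCommMonoid M]
    (hxy : p.r x y) (hyx : y ≠ x) (L : X → ι) (v : M) :
    ∑ c, (if p ≤ Setoid.ker (Function.update L x c) then v else 0)
      = if disconnect p x ≤ Setoid.ker L then v else 0 := by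
  by_cases h : disconnect p x ≤ Setoid.ker L <;> simp [le_ker_update_iff hxy hyx, h]

end Blocks

theorem sum_sum_update_comm {ι κ M : Type*} [Fintype ι] [DecidableEq ι] [Fintype κ]
    [AddCommMonoid M] (t : ι) (F : (ι → κ) → (ι → κ) → M) :
    ∑ g, ∑ m, F g (Function.update g t m) = ∑ g, ∑ m, F (Function.update g t m) g := by
  let φ : (ι → κ) × κ → (ι → κ) × κ := fun gm => (Function.update gm.1 t gm.2, gm.1 t)
  have hφ : Function.Involutive φ := fun gm => by simp [φ]
  simp only [← Fintype.sum_prod_type']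
  exact Fintype.sum_equiv hφ.toPerm _ _ fun gm => by simp [φ]

theorem sum_prod_ofFn_update {A ι : Type*} [Semiring A] [Fintype ι] {k : ℕ} (v : Fin k → A)
    (t : Fin k) (a : ι → A) :
    ∑ c, (List.ofFn (Function.update v t (a c))).prod
      = (List.ofFn (Function.update v t (∑ c, a c))).prod :=
  (map_sum ((MultilinearMap.mkPiAlgebraFin ℕ k A).toLinearMap v t) a Finset.univ).symm

theorem sum_prod_ofFn_update_row {A : Type*} [Semiring A] {n l : ℕ} {u : Fin n → Fin n → A}
    (hsing : ∀ i j : Fin n, (∑ m, u m j) = ∑ m, u i m) (β γ : Fin l → Fin n) (t : Fin l) :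
    ∑ c, (List.ofFn fun s => u (Function.update β t c s) (γ s)).prod
      = ∑ m, (List.ofFn fun s => u (β s) (Function.update γ t m s)).prod := by
  simp only [Function.apply_update (fun s i => u i (γ s)),
    Function.apply_update (fun s j => u (β s) j), sum_prod_ofFn_update, hsing (β t) (γ t)]

theorem labelsMatch_iff_le_ker {n k l : ℕ} (p : Partition k l) (α : Fin k → Fin n)
    (β : Fin l → Fin n) : labelsMatch p α β ↔ p ≤ Setoid.ker (Sum.elim α β) :=
  ⟨fun h _ _ hab => h _ _ hab, fun h _ _ hab => h hab⟩

theorem sum_ite_labelsMatch_update_inr {n k l : ℕ} {M : Type*} [AddCommMonoid M]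
    {p : Partition k l} {t : Fin l} {y : Fin k ⊕ Fin l} (hy : p.r (Sum.inr t) y)
    (hyt : y ≠ Sum.inr t) (α : Fin k → Fin n) (β : Fin l → Fin n) (v : M) :
    ∑ c, (if labelsMatch p α (Function.update β t c) then v else 0)
      = if labelsMatch (disconnect p (Sum.inr t)) α β then v else 0 := by
  simp only [labelsMatch_iff_le_ker, ← Sum.update_elim_inr]
  exact sum_ite_le_ker_update hy hyt _ v

theorem involution_rel {k l : ℕ} (p : Partition k l) (a b : Fin l ⊕ Fin k) :
    (involution p).r a b ↔ p.r a.swap b.swap := Iff.rfl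

theorem labelsMatch_involution {n k l : ℕ} (p : Partition k l) (α : Fin k → Fin n)
    (β : Fin l → Fin n) : labelsMatch (involution p) β α ↔ labelsMatch p α β := by
  refine ⟨fun h a b hab => ?_, fun h a b hab => ?_⟩
  · have := h a.swap b.swap (by rwa [involution_rel, Sum.swap_swap, Sum.swap_swap])
    cases a <;> cases b <;> exact this
  · have := h a.swap b.swap hab
    cases a <;> cases b <;> exact this

theorem swap_eq_iff_eq_swap {α β : Type*} {a : α ⊕ β} {b : β ⊕ α} : a.swap = b ↔ a = b.swap := by
  rw [← Sum.swap_swap b, Sum.swap_leftInverse.injective.eq_iff, Sum.swap_swap]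

theorem involution_disconnect {k l : ℕ} (p : Partition k l) (x : Fin k ⊕ Fin l) :
    involution (disconnect p x) = disconnect (involution p) x.swap := by
  ext a b
  show a.swap = b.swap ∨ _ ↔ a = b ∨ _
  simp [involution_rel, swap_eq_iff_eq_swap]

theorem satisfiesRel_involution_iff {A : Type*} [Ring A] {n k l : ℕ}
    (u : Fin n → Fin n → A) (p : Partition k l) :
    SatisfiesRel (fun i j => u j i) (involution p) ↔ SatisfiesRel u p := by
  simp only [SatisfiesRel, labelsMatch_involution]
  exact ⟨fun h α β => (h β α).symm, fun h β α => (h α β).symm⟩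

theorem SatisfiesRel.disconnect_inr {A : Type*} [Ring A] {n k l : ℕ}
    {u : Fin n → Fin n → A} (hsing : ∀ i j : Fin n, (∑ m, u m j) = ∑ m, u i m)
    {p : Partition k l} (hp : SatisfiesRel u p) {t : Fin l} {y : Fin k ⊕ Fin l}
    (hy : p.r (Sum.inr t) y) (hyt : y ≠ Sum.inr t) :
    SatisfiesRel u (disconnect p (Sum.inr t)) := by
  intro α β
  calc
    (∑ γ, if labelsMatch (disconnect p (Sum.inr t)) γ β then
        (List.ofFn fun s => u (γ s) (α s)).prod else 0)
      = ∑ c, ∑ γ, if labelsMatch p γ (Function.update β t c) then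
          (List.ofFn fun s => u (γ s) (α s)).prod else 0 := by
      rw [Finset.sum_comm]
      simp only [sum_ite_labelsMatch_update_inr hy hyt]
    _ = ∑ γ', ∑ c, if labelsMatch p α γ' then
          (List.ofFn fun s => u (Function.update β t c s) (γ' s)).prod else 0 := by
      simp only [hp α, Finset.sum_comm (γ := Fin n)]
    _ = ∑ γ', ∑ m, if labelsMatch p α γ' then
          (List.ofFn fun s => u (β s) (Function.update γ' t m s)).prod else 0 := by
      simp only [Finset.sum_ite_irrel, Finset.sum_const_zero, sum_prod_ofFn_update_row hsing]
    _ = ∑ γ', ∑ m, if labelsMatch p α (Function.update γ' t m) then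
          (List.ofFn fun s => u (β s) (γ' s)).prod else 0 :=
      sum_sum_update_comm t fun γ γ' =>
        if labelsMatch p α γ then (List.ofFn fun s => u (β s) (γ' s)).prod else 0
    _ = _ := by simp only [sum_ite_labelsMatch_update_inr hy hyt]

theorem satisfiesRel_disconnect_general {A : Type*} [CStarAlgebra A] {n : ℕ}
    (u : Fin n → Fin n → A)
    (hsing : ∀ i j : Fin n, (∑ m, u m j) = ∑ m, u i m)
    {k l : ℕ} (p : Partition k l) (hp : SatisfiesRel u p) (x : Fin k ⊕ Fin l) :
    SatisfiesRel u (disconnect p x) := by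
  by_cases hx : ∀ y, p.r x y → y = x
  · rwa [disconnect_eq_self hx]
  push Not at hx
  obtain ⟨y, hxy, hyx⟩ := hx
  cases x with
  | inr t => exact hp.disconnect_inr hsing hxy hyx
  | inl s =>
    rw [← satisfiesRel_involution_iff, involution_disconnect]
    refine ((satisfiesRel_involution_iff u p).2 hp).disconnect_inr (fun i j => (hsing j i).symm)
      (y := y.swap) ?_ (by simpa [swap_eq_iff_eq_swap] using hyx)
    rwa [involution_rel, Sum.swap_swap]

/-- Lemma B.2(b) (disconnecting a point, for a fixed representation, self-adjoint
case): given the relations `∑ₖ u_{kj} = ∑ₗ u_{il}` of the double-singleton partition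
in `P(1,1)`, if the relations `R(p)` hold, then the relations of the partition obtained
by disconnecting any point `x` from its block (turning it into a singleton) hold. -/
theorem satisfiesRel_disconnect {A : Type*} [CStarAlgebra A] {n : ℕ}
    (u : Fin n → Fin n → A) (hsa : ∀ i j, IsSelfAdjoint (u i j))
    (hsing : ∀ i j : Fin n, (∑ m, u m j) = ∑ m, u i m)
    {k l : ℕ} (p : Partition k l) (hp : SatisfiesRel u p) (x : Fin k ⊕ Fin l) :
    SatisfiesRel u (disconnect p x) :=
  satisfiesRel_disconnect_general u hsing p hp x

end PartitionCstar
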